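/- Let b = 2, let k be a positive integer with v = v(k), and let j ∈ ℕ. Then: (i) sup_{x ∈ [0,1]} |W_k^{(j)}(x) − I^{(j)}(k)| ≤ 2^{−j(a_v+1) − μ(k) − v}; (ii) |I^{(j)}(k)| ≤ 2^{−j(a_v+1) − μ(k) − v}; (iii) sup_{x ∈ [0,1]} |W_k^{(j)}(x)| ≤ 2^{−j(a_v+1) − μ(k) − v + 1}; (iv) if j is odd, then I^{(j)}(k) = 0. -/

import Mathlib

open MeasureTheory Complex
open scoped ENNReal NNReal

noncomputable section

namespace WalshPaper

/-- `ω_b = exp(2π√-1/b)`. -/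
def omega (b : ℕ) : ℂ := Complex.exp (2 * Real.pi * Complex.I / b)

/-- `conj ω_b`. -/
def omegaBar (b : ℕ) : ℂ := (starRingEnd ℂ) (omega b)

/-- The `j`-th `b`-adic digit `ξ_j` of `x ∈ [0,1)` (the coefficient of `b^{-j}`),
taking the expansion with infinitely many digits different from `b-1`. -/
def xdigit (b j : ℕ) (x : ℝ) : ℕ := (⌊x * (b : ℝ) ^ j⌋ % (b : ℤ)).toNat

/-- The `k`-th `b`-adic Walsh function: `wal_k(x) = ω_b^(κ_1 ξ_{a_1} + ⋯ + κ_v ξ_{a_v})`,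
written as a sum over all digit positions of `k` (digits of `k` beyond position `k` vanish). -/
def wal (b k : ℕ) (x : ℝ) : ℂ :=
  omega b ^ ∑ j ∈ Finset.range k, (k / b ^ j % b) * xdigit b (j + 1) x

/-- The list of terms `κ_i b^{a_i - 1}` of the `b`-adic expansion of `k`, lowest first,
i.e. `[κ_v b^{a_v-1}, …, κ_1 b^{a_1-1}]`. -/
def terms (b k : ℕ) : List ℕ :=
  ((Nat.digits b k).zipIdx.map Prod.swap |>.filter fun p => p.2 ≠ 0).map fun p => p.2 * b ^ p.1

/-- `v(k)`, the number of nonzero `b`-adic digits of `k`. -/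
def nu (b k : ℕ) : ℕ := (terms b k).length

/-- The list `[a_1, …, a_v]` (decreasing). -/
def alist (b k : ℕ) : List ℕ :=
  (((Nat.digits b k).zipIdx.map Prod.swap |>.filter fun p => p.2 ≠ 0).map fun p => p.1 + 1).reverse

/-- The list `[κ_v, κ_{v-1}, …, κ_1]` (corresponding digits, lowest first). -/
def kappas (b k : ℕ) : List ℕ :=
  ((Nat.digits b k).zipIdx.map Prod.swap |>.filter fun p => p.2 ≠ 0).map fun p => p.2

/-- `μ(k) = a_1 + ⋯ + a_v`. -/
def mu (b k : ℕ) : ℕ := (alist b k).sum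

/-- `μ_α(k) = a_1 + ⋯ + a_{min(α,v)}`. -/
def muAlpha (b α k : ℕ) : ℕ := ((alist b k).take α).sum

/-- `a_v`, the smallest exponent (junk value `0` for `k = 0`). -/
def aLow (b k : ℕ) : ℕ := ((alist b k).getLast?).getD 0

/-- `κ_v`, the lowest nonzero digit of `k`. -/
def kapLow (b k : ℕ) : ℕ := k / b ^ (aLow b k - 1) % b

/-- `μ̄_α(k)`: equals `a_1 + ⋯ + a_v + (α - v) a_v` if `v ≤ α`, and `a_1 + ⋯ + a_α` else. -/
def muBar (b α k : ℕ) : ℕ :=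
  if nu b k ≤ α then mu b k + (α - nu b k) * aLow b k else muAlpha b α k

/-- `k_{≤ n} = Σ_{i=1}^{min(n,v)} κ_i b^{a_i - 1}` (the `min(n,v)` highest terms). -/
def kHigh (b k n : ℕ) : ℕ := ((terms b k).reverse.take n).sum

/-- `k_{> n} = Σ_{i=n+1}^{v} κ_i b^{a_i - 1}` (the remaining lower terms). -/
def kLow (b k n : ℕ) : ℕ := ((terms b k).reverse.drop n).sum

/-- Auxiliary function defining `W` along the list of terms of `k`, lowest term first. -/
def WAux (b : ℕ) : List ℕ → ℝ → ℂ
  | [], _ => 1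
  | t :: rest, x => ∫ y in (0:ℝ)..x, (starRingEnd ℂ) (wal b t y) * WAux b rest y

/-- `W_k : [0,1] → ℂ`, defined by `W_0 = 1` and `W_k(x) = ∫_0^x conj(wal_{κ_v b^{a_v-1}}(y)) W_{k'}(y) dy`
with `k' = k - κ_v b^{a_v-1}`. -/
def W (b k : ℕ) (x : ℝ) : ℂ := WAux b (terms b k) x

/-- `I(k) = ∫_0^1 W_k(x) dx`. -/
def I (b k : ℕ) : ℂ := ∫ x in (0:ℝ)..1, W b k x

/-- The iterated functions `W_k^{(j)}`: `W_k^{(0)} = W_k`,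
`W_k^{(j+1)}(x) = ∫_0^x (W_k^{(j)}(y) - I^{(j)}(k)) dy` where `I^{(j)}(k) = ∫_0^1 W_k^{(j)}`. -/
def Wj (b k : ℕ) : ℕ → ℝ → ℂ
  | 0 => W b k
  | j + 1 => fun x => ∫ y in (0:ℝ)..x, (Wj b k j y - ∫ t in (0:ℝ)..1, Wj b k j t)

/-- `I^{(j)}(k) = ∫_0^1 W_k^{(j)}(x) dx`. -/
def Ij (b k j : ℕ) : ℂ := ∫ x in (0:ℝ)..1, Wj b k j x

/-- The `k`-th Walsh coefficient of `f : [0,1) → ℝ`. -/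
def walshCoeff (b : ℕ) (f : ℝ → ℝ) (k : ℕ) : ℂ :=
  ∫ x in (0:ℝ)..1, (f x : ℂ) * (starRingEnd ℂ) (wal b k x)

/-- The half-open unit cube `[0,1)^s`. -/
def cube (s : ℕ) : Set (Fin s → ℝ) := Set.univ.pi fun _ => Set.Ico (0:ℝ) 1

/-- The closed unit cube `[0,1]^s`. -/
def cubeC (s : ℕ) : Set (Fin s → ℝ) := Set.univ.pi fun _ => Set.Icc (0:ℝ) 1

/-- The `k⃗`-th Walsh coefficient of `f : [0,1)^s → ℝ`. -/
def walshCoeffS (b s : ℕ) (f : (Fin s → ℝ) → ℝ) (k : Fin s → ℕ) : ℂ :=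
  ∫ x in cube s, (f x : ℂ) * (starRingEnd ℂ) (∏ j, wal b (k j) (x j))

/-- `m_b = 2 sin(π/b)`. -/
def mb (b : ℕ) : ℝ := 2 * Real.sin (Real.pi / b)

/-- `M_b = max_{c=1,…,b-1} |1 - ω_b^{-c}|`. -/
def Mb (b : ℕ) : ℝ := if Even b then 2 else 2 * Real.sin ((b + 1) * Real.pi / (2 * b))

/-- `C_v(b) = (b m_b/(b - M_b)) (1 - (M_b/b)^v)`. -/
def Cv (b v : ℕ) : ℝ := (b * mb b / (b - Mb b)) * (1 - (Mb b / b) ^ v)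

/-- The partial derivative of `g` in the `j`-th coordinate. -/
def pderiv {s : ℕ} (j : Fin s) (g : (Fin s → ℝ) → ℝ) (x : Fin s → ℝ) : ℝ :=
  deriv (fun t => g (Function.update x j t)) (x j)

/-- The mixed partial derivative `f^{(m_1,…,m_s)} = (∂/∂x_1)^{m_1} ⋯ (∂/∂x_s)^{m_s} f`. -/
def mixedPartial {s : ℕ} (m : Fin s → ℕ) (f : (Fin s → ℝ) → ℝ) : (Fin s → ℝ) → ℝ :=
  (List.finRange s).foldr (fun j g => (fun h => pderiv j h)^[m j] g) f

/-- `f` has continuous mixed partial derivatives up to order `α_j` in each variable `x_j`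
on the unit cube. -/
def HasContMixedPartials {s : ℕ} (α : Fin s → ℕ) (f : (Fin s → ℝ) → ℝ) : Prop :=
  ∀ m : Fin s → ℕ, (∀ j, m j ≤ α j) →
    ContinuousOn (mixedPartial m f) (cubeC s) ∧
      ∀ j : Fin s, m j < α j → ∀ x ∈ cubeC s,
        DifferentiableAt ℝ (fun t => mixedPartial m f (Function.update x j t)) (x j)

/-- `b_r(x) = B_r(x)/r!`, the normalized Bernoulli polynomial. -/
def bpoly (r : ℕ) (x : ℝ) : ℝ := (Polynomial.aeval x) (Polynomial.bernoulli r) / r.factorial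

/-- `b̃_α(x-y)`. -/
def btilde (α : ℕ) (x y : ℝ) : ℝ :=
  if Even α then bpoly α |x - y| else (if x < y then -1 else 1) * bpoly α |x - y|


/-- `2^{-a}`. -/
noncomputable def qr (a : ℕ) : ℝ := ((2:ℝ)^a)⁻¹

lemma qr_pos (a : ℕ) : 0 < qr a := by
  rw [qr]; positivity

lemma qr_succ (a : ℕ) : qr (a+1) = qr a / 2 := by
  simp [qr, pow_succ]; ring

/-- Rademacher-type function with anti-period `2^{-a}`. -/
noncomputable def rad (a : ℕ) (y : ℝ) : ℝ := (-1 : ℝ) ^ ⌊y * 2^a⌋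

lemma rad_sq (a : ℕ) (y : ℝ) : rad a y * rad a y = 1 := by
  rw [rad, ← zpow_add₀ (by norm_num : (-1:ℝ) ≠ 0)]
  exact Even.neg_one_zpow ⟨⌊y * 2^a⌋, by ring⟩

lemma rad_abs (a : ℕ) (y : ℝ) : |rad a y| = 1 := by
  rcases Int.even_or_odd ⌊y * 2^a⌋ with h | h
  · rw [rad, Even.neg_one_zpow h]; norm_num
  · rw [rad, Odd.neg_one_zpow h]; norm_num

lemma rad_add_qr (a : ℕ) (x : ℝ) : rad a (x + qr a) = - rad a x := by
  have h2 : ((2:ℝ)^a) ≠ 0 := by positivity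
  have : (x + qr a) * 2^a = x * 2^a + 1 := by rw [qr, add_mul, inv_mul_cancel₀ h2]
  rw [rad, this, Int.floor_add_one, zpow_add₀ (by norm_num : (-1:ℝ) ≠ 0)]
  simp [rad]

lemma rad_eq_one {a : ℕ} {x : ℝ} (h0 : 0 ≤ x) (h1 : x < qr a) : rad a x = 1 := by
  have h2 : (0:ℝ) < (2:ℝ)^a := by positivity
  have hlt : x * 2^a < 1 := by
    have := mul_lt_mul_of_pos_right h1 h2
    rwa [qr, inv_mul_cancel₀ (ne_of_gt h2)] at this
  have : ⌊x * 2^a⌋ = 0 := by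
    rw [Int.floor_eq_zero_iff]
    exact ⟨by positivity, hlt⟩
  rw [rad, this]; norm_num

lemma rad_measurable (a : ℕ) : Measurable (rad a) := by
  have : Measurable fun y : ℝ => ⌊y * 2^a⌋ := (measurable_id.mul_const _).floor
  exact Measurable.comp (measurable_from_top) this


lemma ceil_eq (y : ℝ) (h : ∀ n : ℤ, y ≠ (n:ℝ)) : ⌈y⌉ = ⌊y⌋ + 1 := by
  rw [Int.ceil_eq_iff]
  refine ⟨?_, by push_cast; exact (Int.lt_floor_add_one y).le⟩
  have h1 : ((⌊y⌋:ℝ)) ≠ y := fun he => h ⌊y⌋ he.symm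
  have h2 : ((⌊y⌋:ℝ)) ≤ y := Int.floor_le y
  push_cast
  simpa using lt_of_le_of_ne h2 h1

lemma rad_reflect {a : ℕ} (ha : 1 ≤ a) {x : ℝ} (hx : ∀ n : ℤ, x * 2^a ≠ (n:ℝ)) :
    rad a (1 - x) = - rad a x := by
  set y := x * 2^a with hy
  have key : (1 - x) * 2^a = ((2^a : ℤ) : ℝ) + (-y) := by push_cast; ring
  have hfl : ⌊(1 - x) * 2^a⌋ = 2^a + (-(⌊y⌋ + 1)) := by
    rw [key, Int.floor_intCast_add, Int.floor_neg, ceil_eq y hx]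
  have hodd : Odd ((2^a + (-(⌊y⌋ + 1))) - ⌊y⌋) := by
    have : (2^a + (-(⌊y⌋ + 1))) - ⌊y⌋ = 2 * (2^(a-1) - ⌊y⌋ - 1) + 1 := by
      have h2 : (2:ℤ)^a = 2 * 2^(a-1) := by
        conv_lhs => rw [show a = 1 + (a - 1) by omega, pow_add, pow_one]
      omega
    exact ⟨2^(a-1) - ⌊y⌋ - 1, by omega⟩
  have hne : (-1:ℝ) ≠ 0 := by norm_num
  calc rad a (1 - x) = (-1:ℝ) ^ (2^a + (-(⌊y⌋ + 1))) := by rw [rad, hfl]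
    _ = (-1:ℝ) ^ (⌊y⌋ + ((2^a + (-(⌊y⌋ + 1))) - ⌊y⌋)) := by ring_nf
    _ = (-1:ℝ) ^ ⌊y⌋ * (-1:ℝ) ^ ((2^a + (-(⌊y⌋ + 1))) - ⌊y⌋) := zpow_add₀ hne _ _
    _ = - rad a x := by rw [Odd.neg_one_zpow hodd, rad]; ring

/-- The key invariant: `f` continuous, reflection `f(x + 2^{-a}) = 2m - f(x)`, `|f - m| ≤ M`. -/
structure Inv (f : ℝ → ℝ) (a : ℕ) (m M : ℝ) : Prop where
  cont : Continuous f
  refl : ∀ x, f (x + qr a) = 2*m - f x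
  bdd : ∀ x, |f x - m| ≤ M

lemma Inv.per {f a m M} (h : Inv f a m M) : Function.Periodic f (2 * qr a) := by
  intro x
  have h1 := h.refl (x + qr a)
  have h2 := h.refl x
  have : x + 2 * qr a = x + qr a + qr a := by ring
  rw [this, h1, h2]; ring

/-- integral of a continuous `p`-periodic function over `[0, n p]`. -/
lemma int_per_mul {f : ℝ → ℝ} {p : ℝ} (hc : Continuous f) (hper : Function.Periodic f p) :
    ∀ n : ℕ, ∫ t in (0:ℝ)..(n*p), f t = n * ∫ t in (0:ℝ)..p, f t := by
  intro n
  induction n with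
  | zero => simp
  | succ n ih =>
    have int1 : IntervalIntegrable f volume 0 ((n:ℝ)*p) := hc.intervalIntegrable _ _
    have int2 : IntervalIntegrable f volume ((n:ℝ)*p) (((n:ℝ)+1)*p) := hc.intervalIntegrable _ _
    have hadd := intervalIntegral.integral_add_adjacent_intervals int1 int2
    have h2 : ∫ t in (0:ℝ)..p, f (t + (n:ℝ)*p) = ∫ t in (0:ℝ)..p, f t := by
      apply intervalIntegral.integral_congr
      intro t _
      simpa [mul_comm] using (hper.nat_mul n) t
    have hshift : ∫ t in ((n:ℝ)*p)..(((n:ℝ)+1)*p), f t = ∫ t in (0:ℝ)..p, f t := by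
      rw [show ((n:ℝ)*p) = 0 + (n:ℝ)*p by ring, show (((n:ℝ)+1)*p) = p + (n:ℝ)*p by ring,
        ← intervalIntegral.integral_comp_add_right f ((n:ℝ)*p)]
      exact h2
    push_cast
    linarith [hadd, hshift, ih]

lemma qr_mul (c d : ℕ) : (2:ℝ)^d * (2 * qr (c+1+d)) = qr c := by
  rw [qr, qr, pow_add, pow_add]
  field_simp

lemma Inv.per_c {f a m M} (h : Inv f a m M) {c : ℕ} (hca : c < a) (x : ℝ) :
    f (x + qr c) = f x := by
  obtain ⟨d, rfl⟩ : ∃ d, a = c + 1 + d := ⟨a - c - 1, by omega⟩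
  have := (h.per.nat_mul (2^d)) x
  rwa [show ((2^d : ℕ) : ℝ) * (2 * qr (c+1+d)) = qr c by push_cast; exact qr_mul c d] at this

lemma Inv.int_base {f a m M} (h : Inv f a m M) :
    ∫ t in (0:ℝ)..(2 * qr a), f t = 2 * qr a * m := by
  have int1 : IntervalIntegrable f volume 0 (qr a) := h.cont.intervalIntegrable _ _
  have int2 : IntervalIntegrable f volume (qr a) (2 * qr a) := h.cont.intervalIntegrable _ _
  have hadd := intervalIntegral.integral_add_adjacent_intervals int1 int2
  have hshift : ∫ t in (qr a)..(2 * qr a), f t = ∫ t in (0:ℝ)..(qr a), (2*m - f t) := by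
    have hcomp : ∫ t in (0:ℝ)..(qr a), f (t + qr a)
        = ∫ t in ((0:ℝ)+qr a)..(qr a + qr a), f t := intervalIntegral.integral_comp_add_right f (qr a)
    have e1 : ∫ t in (qr a)..(2*qr a), f t = ∫ t in ((0:ℝ)+qr a)..(qr a+qr a), f t := by
      congr 1 <;> ring
    rw [e1, ← hcomp]
    apply intervalIntegral.integral_congr
    intro t _
    exact h.refl t
  have hsub : ∫ t in (0:ℝ)..(qr a), (2*m - f t)
      = 2*m*(qr a) - ∫ t in (0:ℝ)..(qr a), f t := by
    rw [intervalIntegral.integral_sub (by exact (continuous_const).intervalIntegrable _ _) int1]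
    simp
    ring
  rw [← hadd, hshift, hsub]
  ring

lemma Inv.int_c {f a m M} (h : Inv f a m M) {c : ℕ} (hca : c < a) :
    ∫ t in (0:ℝ)..(qr c), f t = qr c * m := by
  obtain ⟨d, rfl⟩ : ∃ d, a = c + 1 + d := ⟨a - c - 1, by omega⟩
  have hper := h.per
  have := int_per_mul h.cont hper (2^d)
  rw [h.int_base] at this
  have hq : ((2^d : ℕ) : ℝ) * (2 * qr (c+1+d)) = qr c := by push_cast; exact qr_mul c d
  rw [hq] at this
  rw [this, ← hq]
  push_cast
  ring

lemma Inv.int01 {f a m M} (h : Inv f a m M) (ha : 1 ≤ a) :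
    ∫ t in (0:ℝ)..1, f t = m := by
  have := h.int_c (c := 0) ha
  rw [qr] at this
  simpa using this

lemma bound_of_refl {F : ℝ → ℝ} {q m' B : ℝ} (hq : 0 < q)
    (hrefl : ∀ x, F (x+q) = 2*m' - F x)
    (h : ∀ t ∈ Set.Ico (0:ℝ) q, |F t - m'| ≤ B) : ∀ x, |F x - m'| ≤ B := by
  intro x
  have hper : Function.Periodic (fun x => |F x - m'|) q := by
    intro y
    simp only [hrefl y]
    rw [show 2*m' - F y - m' = -(F y - m') by ring, abs_neg]
  obtain ⟨y, hy, he⟩ := hper.exists_mem_Ico₀ hq x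
  rw [he]
  exact h y hy

lemma radInt (a : ℕ) {f : ℝ → ℝ} (hf : Continuous f) (u v : ℝ) :
    IntervalIntegrable (fun t => rad a t * f t) volume u v := by
  apply (hf.intervalIntegrable u v).mono_fun
  · exact ((rad_measurable a).mul hf.measurable).aestronglyMeasurable
  · filter_upwards with x
    simp only [norm_mul, Real.norm_eq_abs, rad_abs, one_mul, le_refl]

lemma step0 {f : ℝ → ℝ} {m : ℝ} (a : ℕ) (hm : 0 ≤ m) (hc : Continuous f)
    (hpos : ∀ x, 0 ≤ f x)
    (hper : ∀ x, f (x + qr a) = f x)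
    (hint : ∫ t in (0:ℝ)..(qr a), f t = qr a * m) :
    Inv (fun x => ∫ t in (0:ℝ)..x, rad a t * f t) a (qr a * m / 2) (qr a * m / 2) := by
  set q := qr a with hqdef
  have hq : 0 < q := qr_pos a
  set F := fun x => ∫ t in (0:ℝ)..x, rad a t * f t with hF
  have hFq : F q = q * m := by
    rw [hF]
    have : ∫ t in (0:ℝ)..q, rad a t * f t = ∫ t in (0:ℝ)..q, f t := by
      apply intervalIntegral.integral_congr_ae
      have hne : ∀ᵐ (x:ℝ), x ≠ q := by
        have : ({q} : Set ℝ).Countable := Set.countable_singleton q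
        have h0 := this.measure_zero (volume : Measure ℝ)
        rw [MeasureTheory.ae_iff]
        simpa using h0
      filter_upwards [hne] with x hx hmem
      rw [Set.uIoc_of_le hq.le] at hmem
      rw [rad_eq_one hmem.1.le (lt_of_le_of_ne hmem.2 hx)]
      ring
    show (∫ t in (0:ℝ)..q, rad a t * f t) = q * m
    rw [this, hint]
  have hrefl : ∀ x, F (x + q) = 2 * (q*m/2) - F x := by
    intro x
    have hadd := intervalIntegral.integral_add_adjacent_intervals (radInt a hc 0 q) (radInt a hc q (x+q))
    have hcomp : ∫ t in (0:ℝ)..x, (fun s => rad a s * f s) (t + q)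
        = ∫ t in ((0:ℝ)+q)..(x+q), rad a t * f t :=
      intervalIntegral.integral_comp_add_right (fun s => rad a s * f s) q
    have hneg : ∫ t in (0:ℝ)..x, (fun s => rad a s * f s) (t + q)
        = - F x := by
      have : ∀ t, rad a (t + q) * f (t + q) = -(rad a t * f t) := by
        intro t
        rw [hper t, hqdef, rad_add_qr]
        ring
      simp only [this]
      rw [intervalIntegral.integral_neg]
    have e1 : ∫ t in ((0:ℝ)+q)..(x+q), rad a t * f t = F (x+q) - F q := by
      rw [show (0:ℝ)+q = q by ring]
      have := hadd
      simp only [hF]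
      linarith [hadd]
    rw [e1] at hcomp
    rw [hneg] at hcomp
    rw [hFq] at hcomp
    linarith [hcomp]
  refine ⟨?_, hrefl, ?_⟩
  · exact intervalIntegral.continuous_primitive (fun u v => radInt a hc u v) 0
  · apply bound_of_refl hq hrefl
    intro t ht
    have hrad1 : F t = ∫ s in (0:ℝ)..t, f s := by
      apply intervalIntegral.integral_congr
      intro x hx
      rw [Set.uIcc_of_le ht.1] at hx
      show rad a x * f x = f x
      rw [rad_eq_one hx.1 (lt_of_le_of_lt hx.2 ht.2)]
      ring
    have h0 : 0 ≤ ∫ s in (0:ℝ)..t, f s :=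
      intervalIntegral.integral_nonneg ht.1 (fun u _ => hpos u)
    have h1 : ∫ s in (0:ℝ)..t, f s ≤ q * m := by
      have hadd := intervalIntegral.integral_add_adjacent_intervals
        (hc.intervalIntegrable (μ := volume) 0 t) (hc.intervalIntegrable (μ := volume) t q)
      have h2 : 0 ≤ ∫ s in t..q, f s :=
        intervalIntegral.integral_nonneg ht.2.le (fun u _ => hpos u)
      rw [← hint]
      linarith [hadd]
    rw [hrad1]
    rw [abs_le]
    constructor <;> linarith

lemma stepJ {f : ℝ → ℝ} {m M : ℝ} {a : ℕ} (h : Inv f a m M) :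
    Inv (fun x => ∫ t in (0:ℝ)..x, (f t - m)) a
      ((∫ t in (0:ℝ)..(qr a), (f t - m))/2) (qr a * M / 2) ∧
    |(∫ t in (0:ℝ)..(qr a), (f t - m))/2| ≤ qr a * M / 2 := by
  set q := qr a with hqdef
  have hq : 0 < q := qr_pos a
  set g := fun t => f t - m with hg
  have hgc : Continuous g := h.cont.sub continuous_const
  have hgbd : ∀ x, ‖g x‖ ≤ M := fun x => by
    rw [Real.norm_eq_abs]; exact h.bdd x
  set F := fun x => ∫ t in (0:ℝ)..x, g t with hF
  set m' := (∫ t in (0:ℝ)..q, g t)/2 with hm'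
  have hFq : F q = 2 * m' := by rw [hF, hm']; ring
  have hbint : ∀ u v : ℝ, |∫ t in u..v, g t| ≤ M * |v - u| := by
    intro u v
    have := intervalIntegral.norm_integral_le_of_norm_le_const
      (C := M) (f := g) (a := u) (b := v) (fun x _ => hgbd x)
    simpa using this
  have hrefl : ∀ x, F (x + q) = 2 * m' - F x := by
    intro x
    have hadd := intervalIntegral.integral_add_adjacent_intervals
      (hgc.intervalIntegrable (μ := volume) 0 q) (hgc.intervalIntegrable (μ := volume) q (x+q))
    have hcomp : ∫ t in (0:ℝ)..x, g (t + q) = ∫ t in ((0:ℝ)+q)..(x+q), g t :=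
      intervalIntegral.integral_comp_add_right g q
    have hneg : ∫ t in (0:ℝ)..x, g (t + q) = - F x := by
      have : ∀ t, g (t + q) = -(g t) := by
        intro t
        rw [hg]
        simp only
        rw [hqdef, h.refl t]
        ring
      simp only [this]
      rw [intervalIntegral.integral_neg]
    have e1 : ∫ t in ((0:ℝ)+q)..(x+q), g t = F (x+q) - F q := by
      rw [show (0:ℝ)+q = q by ring]
      simp only [hF]
      linarith [hadd]
    rw [e1, hneg, hFq] at hcomp
    linarith [hcomp]
  have hMq : 0 ≤ M := le_trans (abs_nonneg _) (h.bdd 0)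
  refine ⟨⟨?_, hrefl, ?_⟩, ?_⟩
  · exact intervalIntegral.continuous_primitive
      (fun u v => hgc.intervalIntegrable (μ := volume) u v) 0
  · apply bound_of_refl hq hrefl
    intro t ht
    have hadd := intervalIntegral.integral_add_adjacent_intervals
      (hgc.intervalIntegrable (μ := volume) 0 t) (hgc.intervalIntegrable (μ := volume) t q)
    have e2 : F t - m' = ((∫ s in (0:ℝ)..t, g s) - (∫ s in t..q, g s))/2 := by
      rw [hm']
      simp only [hF]
      linarith [hadd]
    have b1 := hbint 0 t
    have b2 := hbint t q
    rw [sub_zero, _root_.abs_of_nonneg ht.1] at b1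
    rw [_root_.abs_of_nonneg (by linarith [ht.2] : (0:ℝ) ≤ q - t)] at b2
    rw [e2]
    calc |((∫ s in (0:ℝ)..t, g s) - (∫ s in t..q, g s))/2|
        ≤ (|∫ s in (0:ℝ)..t, g s| + |∫ s in t..q, g s|)/2 := by
          rw [abs_div, show |(2:ℝ)| = 2 by norm_num]
          gcongr
          exact (abs_sub _ _)
      _ ≤ (M * t + M * (q - t))/2 := by apply div_le_div_of_nonneg_right ?_ (by norm_num); linarith
      _ = q * M / 2 := by ring
  · have := hbint 0 q
    rw [sub_zero, _root_.abs_of_nonneg hq.le] at this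
    rw [hm', abs_div]
    rw [show |(2:ℝ)| = 2 by norm_num]
    apply div_le_div_of_nonneg_right ?_ (by norm_num)
    linarith [this]

/-- real-valued `W` along an exponent list (lowest exponent first). -/
noncomputable def WA : List ℕ → ℝ → ℝ
  | [], _ => 1
  | e :: E, x => ∫ t in (0:ℝ)..x, rad (e+1) t * WA E t

lemma qr_add (m n : ℕ) : qr (m + n) = qr m * qr n := by
  rw [qr, qr, qr, pow_add, mul_inv]

noncomputable def mval (E : List ℕ) : ℝ := qr ((E.map (fun e => e+2)).sum)

lemma mval_nonneg (E : List ℕ) : 0 ≤ mval E := (qr_pos _).le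

lemma mval_cons (e : ℕ) (E : List ℕ) : mval (e :: E) = qr (e+1) * mval E / 2 := by
  rw [mval, mval, List.map_cons, List.sum_cons, qr_add, qr_succ]
  ring

lemma ae_not_dyadic (a : ℕ) : ∀ᵐ s : ℝ, ∀ n : ℤ, s * 2^a ≠ (n:ℝ) := by
  have hS : {s : ℝ | ∃ n : ℤ, s * 2^a = (n:ℝ)}.Countable := by
    apply Set.Countable.mono ?_ (Set.countable_range (fun n : ℤ => (n:ℝ)/(2^a)))
    rintro s ⟨n, hn⟩
    refine ⟨n, ?_⟩
    have h2 : ((2:ℝ)^a) ≠ 0 := by positivity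
    field_simp
    linarith [hn]
  have h0 := hS.measure_zero (volume : Measure ℝ)
  rw [MeasureTheory.ae_iff]
  convert h0 using 2
  ext s
  simp

/-- symmetry propagation along the `W`-chain. -/
lemma sym_step {f : ℝ → ℝ} (hf : Continuous f) (a : ℕ) (ha : 1 ≤ a)
    (hsym : ∀ x, f (1 - x) = f x) (x : ℝ) :
    (∫ t in (0:ℝ)..(1-x), rad a t * f t) = ∫ t in (0:ℝ)..x, rad a t * f t := by
  set g := fun t => rad a t * f t with hg
  have hgi : ∀ u v : ℝ, IntervalIntegrable g volume u v := radInt a hf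
  have key : ∀ y : ℝ, (∫ t in (0:ℝ)..(1-y), g t)
      = (∫ t in (0:ℝ)..1, g t) + ∫ t in (0:ℝ)..y, g t := by
    intro y
    have hadd := intervalIntegral.integral_add_adjacent_intervals (hgi 0 (1-y)) (hgi (1-y) 1)
    have hcomp : ∫ s in (0:ℝ)..y, g (1 - s) = ∫ t in (1-y)..(1-(0:ℝ)), g t :=
      intervalIntegral.integral_comp_sub_left g 1
    have hneg : ∫ s in (0:ℝ)..y, g (1 - s) = - ∫ t in (0:ℝ)..y, g t := by
      rw [← intervalIntegral.integral_neg]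
      apply intervalIntegral.integral_congr_ae
      filter_upwards [ae_not_dyadic a] with s hs _
      rw [hg]
      simp only
      rw [rad_reflect ha hs, hsym s]
      ring
    rw [hneg] at hcomp
    rw [show (1:ℝ)-(0:ℝ) = 1 by ring] at hcomp
    linarith [hadd, hcomp]
  have h1 : (∫ t in (0:ℝ)..1, g t) = 0 := by
    have := key 1
    simp only [sub_self] at this
    simp only [intervalIntegral.integral_same] at this
    linarith
  have := key x
  rw [h1] at this
  simpa using this

structure Good (f : ℝ → ℝ) (m : ℝ) (c : ℕ) : Prop where
  cont : Continuous f
  pos : ∀ x, 0 ≤ f x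
  per : ∀ x, f (x + qr c) = f x
  int : ∫ t in (0:ℝ)..(qr c), f t = qr c * m
  sym : ∀ x, f (1 - x) = f x

lemma chain_good : ∀ (E : List ℕ), List.Chain' (· < ·) E →
    ∀ c : ℕ, (∀ e ∈ E, c ≤ e) → Good (WA E) (mval E) c := by
  intro E
  induction E with
  | nil =>
    intro _ c _
    refine ⟨continuous_const, fun _ => zero_le_one, fun _ => rfl, ?_, fun _ => rfl⟩
    simp [WA, mval, qr]
  | cons e E ih =>
    intro hE c hc
    have hE' : List.Chain' (· < ·) E := hE.tail
    have hle : ∀ e' ∈ E, e + 1 ≤ e' := by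
      intro e' he'
      have := List.isChain_iff_pairwise.mp hE
      exact (List.rel_of_pairwise_cons this he')
    have G := ih hE' (e+1) hle
    have hInv : Inv (WA (e::E)) (e+1) (mval (e::E)) (mval (e::E)) := by
      rw [mval_cons]
      exact step0 (e+1) (mval_nonneg E) G.cont G.pos G.per G.int
    have hsym : ∀ x, WA (e::E) (1-x) = WA (e::E) x := fun x =>
      sym_step G.cont (e+1) (by omega) G.sym x
    have hce : c < e + 1 := by have := hc e (by simp); omega
    refine ⟨hInv.cont, ?_, hInv.per_c hce, ?_, hsym⟩
    · intro x
      have := hInv.bdd x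
      rw [abs_le] at this
      linarith [this.1, mval_nonneg (e::E)]
    · exact hInv.int_c hce

/-- the top-level invariant for a nonempty exponent list. -/
lemma chainA {e : ℕ} {E : List ℕ} (hE : List.Chain' (· < ·) (e::E)) :
    Inv (WA (e::E)) (e+1) (mval (e::E)) (mval (e::E))
    ∧ (∀ x, WA (e::E) (1-x) = WA (e::E) x) := by
  have hE' : List.Chain' (· < ·) E := hE.tail
  have hle : ∀ e' ∈ E, e + 1 ≤ e' := by
    intro e' he'
    exact List.rel_of_pairwise_cons (List.isChain_iff_pairwise.mp hE) he'
  have G := chain_good E hE' (e+1) hle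
  constructor
  · rw [mval_cons]
    exact step0 (e+1) (mval_nonneg E) G.cont G.pos G.per G.int
  · exact fun x => sym_step G.cont (e+1) (by omega) G.sym x

/-- real-valued version of the `j`-iteration. -/
noncomputable def FJ (g : ℝ → ℝ) : ℕ → ℝ → ℝ
  | 0 => g
  | j + 1 => fun x => ∫ t in (0:ℝ)..x, (FJ g j t - ∫ s in (0:ℝ)..1, FJ g j s)

lemma symJ_step {f : ℝ → ℝ} (hf : Continuous f) {ε : ℝ} (hε : ε = 1 ∨ ε = -1)
    (hsym : ∀ x, f (1-x) = ε * f x) (x : ℝ) :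
    (∫ t in (0:ℝ)..(1-x), (f t - ∫ s in (0:ℝ)..1, f s))
      = -ε * ∫ t in (0:ℝ)..x, (f t - ∫ s in (0:ℝ)..1, f s) := by
  set I := ∫ s in (0:ℝ)..1, f s with hI
  set g := fun t => f t - I with hg
  have hgc : Continuous g := hf.sub continuous_const
  have hgi : ∀ u v : ℝ, IntervalIntegrable g volume u v :=
    fun u v => hgc.intervalIntegrable u v
  have hint01 : (∫ t in (0:ℝ)..1, g t) = 0 := by
    rw [hg]
    rw [intervalIntegral.integral_sub (hf.intervalIntegrable _ _)
      ((continuous_const).intervalIntegrable _ _)]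
    simp [hI]
  have hIsym : ∫ s in (0:ℝ)..1, f (1 - s) = I := by
    have := intervalIntegral.integral_comp_sub_left f 1 (a := 0) (b := 1)
    rw [this]; simp [hI]
  have hIe : ε = -1 → I = 0 := by
    intro he
    have h2 : ∫ s in (0:ℝ)..1, f (1 - s) = -I := by
      have : ∀ s, f (1 - s) = -(f s) := by intro s; rw [hsym s, he]; ring
      simp only [this]
      rw [intervalIntegral.integral_neg]
    rw [hIsym] at h2
    linarith
  have hadd := intervalIntegral.integral_add_adjacent_intervals (hgi 0 (1-x)) (hgi (1-x) 1)
  have hcomp : ∫ s in (0:ℝ)..x, g (1 - s) = ∫ t in (1-x)..(1-(0:ℝ)), g t :=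
    intervalIntegral.integral_comp_sub_left g 1
  have hgs : ∀ s, g (1 - s) = ε * g s := by
    intro s
    rw [hg]
    simp only
    rw [hsym s]
    rcases hε with he | he
    · rw [he]; ring
    · rw [he, hIe he]; ring
  have h3 : ∫ s in (0:ℝ)..x, g (1 - s) = ε * ∫ s in (0:ℝ)..x, g s := by
    simp only [hgs]
    rw [intervalIntegral.integral_const_mul]
  rw [h3] at hcomp
  rw [show (1:ℝ)-(0:ℝ) = 1 by ring] at hcomp
  have : (∫ t in (0:ℝ)..(1-x), g t) = -(ε * ∫ s in (0:ℝ)..x, g s) := by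
    linarith [hadd, hcomp, hint01]
  rw [this]
  ring

lemma chainJ {g : ℝ → ℝ} {a : ℕ} (ha : 1 ≤ a) {m0 : ℝ} (hm0 : 0 ≤ m0)
    (h0 : Inv g a m0 m0) (hsym0 : ∀ x, g (1-x) = g x) :
    ∀ j : ℕ, ∃ mJ : ℝ,
      Inv (FJ g j) a mJ ((qr a / 2)^j * m0) ∧ |mJ| ≤ (qr a / 2)^j * m0 ∧
      (∀ x, FJ g j (1-x) = (-1:ℝ)^j * FJ g j x) := by
  intro j
  induction j with
  | zero =>
    refine ⟨m0, by simpa [FJ] using h0, by rw [_root_.abs_of_nonneg hm0]; simp, ?_⟩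
    intro x
    simp [FJ, hsym0 x]
  | succ j ih =>
    obtain ⟨mJ, inv, hb, hsym⟩ := ih
    have hI : ∫ t in (0:ℝ)..1, FJ g j t = mJ := inv.int01 ha
    have hFJ : FJ g (j+1) = fun x => ∫ t in (0:ℝ)..x, (FJ g j t - mJ) := by
      funext x
      show (∫ t in (0:ℝ)..x, (FJ g j t - ∫ s in (0:ℝ)..1, FJ g j s)) = _
      rw [hI]
    obtain ⟨inv', hb'⟩ := stepJ inv
    have hMe : qr a * ((qr a / 2)^j * m0) / 2 = (qr a / 2)^(j+1) * m0 := by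
      rw [pow_succ]
      ring
    refine ⟨(∫ t in (0:ℝ)..(qr a), (FJ g j t - mJ))/2, ?_, ?_, ?_⟩
    · rw [hFJ, ← hMe]
      exact inv'
    · rw [← hMe]
      exact hb'
    · intro x
      have hε : ((-1:ℝ)^j) = 1 ∨ ((-1:ℝ)^j) = -1 := by
        rcases Nat.even_or_odd j with h | h
        · left; exact h.neg_one_pow
        · right; exact h.neg_one_pow
      have := symJ_step inv.cont hε hsym x
      show (∫ t in (0:ℝ)..(1-x), (FJ g j t - ∫ s in (0:ℝ)..1, FJ g j s)) = _
      rw [this, pow_succ]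
      show _ = ((-1:ℝ)^j * -1) * ∫ t in (0:ℝ)..x, (FJ g j t - ∫ s in (0:ℝ)..1, FJ g j s)
      ring

/-- odd symmetry kills the mean. -/
lemma int01_zero_of_odd_sym {f : ℝ → ℝ} (hsym : ∀ x, f (1-x) = -f x) :
    ∫ s in (0:ℝ)..1, f s = 0 := by
  have h1 : ∫ s in (0:ℝ)..1, f (1 - s) = ∫ s in (0:ℝ)..1, f s := by
    have := intervalIntegral.integral_comp_sub_left f 1 (a := 0) (b := 1)
    simpa using this
  have h2 : ∫ s in (0:ℝ)..1, f (1 - s) = - ∫ s in (0:ℝ)..1, f s := by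
    simp only [hsym]
    rw [intervalIntegral.integral_neg]
  linarith [h1, h2]


lemma qr_pow (a j : ℕ) : qr a ^ j = qr (a * j) := by
  rw [qr, qr, inv_pow, ← pow_mul]

/-! ### Glue to the paper's definitions -/

lemma omega_two : omega 2 = -1 := by
  rw [omega]
  push_cast
  rw [show (2 * (Real.pi:ℂ) * Complex.I / 2) = Real.pi * Complex.I by ring,
    Complex.exp_pi_mul_I]

lemma walsh_sum_pow (e : ℕ) (x : ℝ) :
    ∑ j ∈ Finset.range (2^e), (2^e / 2^j % 2) * xdigit 2 (j+1) x = xdigit 2 (e+1) x := by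
  rw [Finset.sum_eq_single_of_mem e (Finset.mem_range.mpr (Nat.lt_two_pow_self (n := e)))]
  · rw [Nat.div_self (by positivity)]
    norm_num
  · intro j _ hne
    rcases lt_or_gt_of_ne hne with h | h
    · have h1 : 2^e / 2^j = 2^(e-j) := Nat.pow_div h.le (by norm_num)
      have h2 : (2:ℕ)^(e-j) % 2 = 0 := by
        rw [show e - j = (e - j - 1) + 1 by omega, pow_succ, Nat.mul_mod_left]
      rw [h1, h2, zero_mul]
    · have h1 : (2:ℕ)^e / 2^j = 0 :=
        Nat.div_eq_of_lt (Nat.pow_lt_pow_right (by norm_num) h)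
      rw [h1]
      simp

lemma zpow_toNat_emod (n : ℤ) : ((-1:ℂ)) ^ ((n % 2).toNat) = (-1:ℂ) ^ n := by
  rcases Int.even_or_odd n with h | h
  · rw [Int.even_iff.mp h, Even.neg_one_zpow h]
    rfl
  · rw [Int.odd_iff.mp h, Odd.neg_one_zpow h]
    norm_num

lemma wal_two_pow (e : ℕ) (x : ℝ) : wal 2 (2^e) x = ((rad (e+1) x : ℝ) : ℂ) := by
  rw [wal, omega_two, walsh_sum_pow, xdigit, rad]
  have hcast : x * ((2:ℕ):ℝ)^(e+1) = x * (2:ℝ)^(e+1) := by norm_num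
  rw [hcast, show ((2:ℕ):ℤ) = (2:ℤ) from by norm_num, zpow_toNat_emod]
  push_cast
  ring

lemma WAux_cast (E : List ℕ) : ∀ x : ℝ,
    WAux 2 (E.map (fun e => 2^e)) x = ((WA E x : ℝ) : ℂ) := by
  induction E with
  | nil => intro x; simp [WAux, WA]
  | cons e E ih =>
    intro x
    show (∫ y in (0:ℝ)..x, (starRingEnd ℂ) (wal 2 (2^e) y) * WAux 2 (E.map (fun e => 2^e)) y)
      = _
    have hpt : ∀ y, (starRingEnd ℂ) (wal 2 (2^e) y) * WAux 2 (E.map (fun e => 2^e)) y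
        = (((rad (e+1) y * WA E y : ℝ)) : ℂ) := by
      intro y
      rw [wal_two_pow, Complex.conj_ofReal, ih y, Complex.ofReal_mul]
    rw [intervalIntegral.integral_congr (fun y _ => hpt y), intervalIntegral.integral_ofReal]
    rfl

lemma Wj_cast {k : ℕ} {E : List ℕ} (hterms : terms 2 k = E.map (fun e => 2^e)) :
    ∀ j, (∀ x, Wj 2 k j x = ((FJ (WA E) j x : ℝ) : ℂ))
      ∧ Ij 2 k j = ((∫ s in (0:ℝ)..1, FJ (WA E) j s : ℝ) : ℂ) := by
  have base : ∀ j, (∀ x, Wj 2 k j x = ((FJ (WA E) j x : ℝ) : ℂ)) → Ij 2 k j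
      = ((∫ s in (0:ℝ)..1, FJ (WA E) j s : ℝ) : ℂ) := by
    intro j hj
    rw [Ij, intervalIntegral.integral_congr (fun y _ => hj y),
      intervalIntegral.integral_ofReal]
  intro j
  induction j with
  | zero =>
    have h0 : ∀ x, Wj 2 k 0 x = ((FJ (WA E) 0 x : ℝ) : ℂ) := by
      intro x
      show W 2 k x = _
      rw [W, hterms]
      exact WAux_cast E x
    exact ⟨h0, base 0 h0⟩
  | succ j ih =>
    have hs : ∀ x, Wj 2 k (j+1) x = ((FJ (WA E) (j+1) x : ℝ) : ℂ) := by
      intro x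
      show (∫ y in (0:ℝ)..x, (Wj 2 k j y - ∫ t in (0:ℝ)..1, Wj 2 k j t)) = _
      have hI : (∫ t in (0:ℝ)..1, Wj 2 k j t)
          = ((∫ s in (0:ℝ)..1, FJ (WA E) j s : ℝ) : ℂ) := by
        rw [intervalIntegral.integral_congr (fun y _ => (ih.1) y),
          intervalIntegral.integral_ofReal]
      have hpt : ∀ y, Wj 2 k j y - (∫ t in (0:ℝ)..1, Wj 2 k j t)
          = (((FJ (WA E) j y - ∫ s in (0:ℝ)..1, FJ (WA E) j s : ℝ)) : ℂ) := by
        intro y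
        rw [hI, ih.1 y, Complex.ofReal_sub]
      rw [intervalIntegral.integral_congr (fun y _ => hpt y),
        intervalIntegral.integral_ofReal]
      rfl
    exact ⟨hs, base (j+1) hs⟩

lemma sum_map_add_two (E : List ℕ) :
    (E.map (fun e => e+2)).sum = (E.map (fun e => e+1)).sum + E.length := by
  induction E with
  | nil => simp
  | cons e E ih => simp [ih]; omega

/-- decomposition of the combinatorial data for `b = 2`, `k > 0`. -/
lemma digits_decomp (k : ℕ) (hk : 0 < k) :
    ∃ (e : ℕ) (E : List ℕ),
      List.Chain' (· < ·) (e :: E) ∧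
      terms 2 k = (e :: E).map (fun e => 2^e) ∧
      aLow 2 k = e + 1 ∧
      mu 2 k + nu 2 k = (((e::E)).map (fun x => x+2)).sum := by
  classical
  set D := Nat.digits 2 k with hD
  set P := (D.zipIdx.map Prod.swap).filter (fun p => p.2 ≠ 0) with hP
  have hP2 : ∀ p ∈ P, p.2 = 1 := by
    intro p hp
    have h1 : p.2 ≠ 0 := by simpa using List.of_mem_filter hp
    have h2 : p ∈ D.zipIdx.map Prod.swap := List.mem_of_mem_filter hp
    have h3 : p.2 ∈ D := by
      obtain ⟨q, hq, rfl⟩ := List.mem_map.mp h2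
      rw [List.mem_zipIdx_iff_getElem?] at hq
      exact List.mem_of_getElem? hq
    have h4 : p.2 < 2 := Nat.digits_lt_base (by norm_num) h3
    omega
  have hPne : P ≠ [] := by
    intro hnil
    have hDne : D ≠ [] := Nat.digits_ne_nil_iff_ne_zero.mpr hk.ne'
    have hlast : D.getLast hDne ≠ 0 := Nat.getLast_digit_ne_zero 2 hk.ne'
    have hmem : D.getLast hDne ∈ D := List.getLast_mem hDne
    obtain ⟨i, hi, hget⟩ := List.mem_iff_getElem.mp hmem
    have henum : (i, D.getLast hDne) ∈ D.zipIdx.map Prod.swap := by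
      refine List.mem_map.mpr ⟨(D.getLast hDne, i), ?_, rfl⟩
      rw [List.mem_zipIdx_iff_getElem?]
      simp [hget.symm, hi]
    have : (i, D.getLast hDne) ∈ P := by
      rw [hP]
      apply List.mem_filter.mpr
      exact ⟨henum, by simpa using hlast⟩
    rw [hnil] at this
    simp at this
  set E := P.map Prod.fst with hE
  have hchain : List.Chain' (· < ·) E := by
    apply List.isChain_iff_pairwise.mpr
    have hsub : E.Sublist ((D.zipIdx.map Prod.swap).map Prod.fst) := List.filter_sublist.map _
    rw [List.map_map, show (Prod.fst ∘ Prod.swap : ℕ × ℕ → ℕ) = Prod.snd from rfl,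
      List.zipIdx_map_snd, ← List.range_eq_range'] at hsub
    exact List.Pairwise.sublist hsub List.pairwise_lt_range
  have hterms : terms 2 k = E.map (fun e => 2^e) := by
    rw [terms, ← hD, ← hP, hE, List.map_map]
    apply List.map_congr_left
    intro p hp
    simp [hP2 p hp]
  obtain ⟨p0, P', hPP⟩ : ∃ p0 P', P = p0 :: P' := by
    cases hPP : P with
    | nil => exact absurd hPP hPne
    | cons a l => exact ⟨a, l, rfl⟩
  have hE2 : E = p0.1 :: P'.map Prod.fst := by rw [hE, hPP]; rfl
  refine ⟨p0.1, P'.map Prod.fst, ?_, ?_, ?_, ?_⟩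
  · rw [← hE2]; exact hchain
  · rw [← hE2]; exact hterms
  · rw [aLow, alist, ← hD, ← hP, List.getLast?_reverse, List.head?_map, hPP]
    rfl
  · have hmu : mu 2 k = (P.map (fun p => p.1 + 1)).sum := by
      rw [mu, alist, ← hD, ← hP, List.sum_reverse]
    have hnu : nu 2 k = P.length := by
      rw [nu, terms, ← hD, ← hP, List.length_map]
    rw [show (p0.1 :: P'.map Prod.fst) = List.map Prod.fst P from hE2.symm ▸ hE ▸ rfl]
    rw [hmu, hnu, sum_map_add_two, List.map_map, List.length_map]
    simp [Function.comp_def]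

/-- Lemma 5.7 (bounds on `W_k^{(j)}` and `I^{(j)}(k)` in the dyadic case). -/
theorem Wj_Ij_dyadic_bound (k : ℕ) (hk : 0 < k) (j : ℕ) :
    (∀ x ∈ Set.Icc (0:ℝ) 1,
      ‖Wj 2 k j x - Ij 2 k j‖ ≤
        (2:ℝ) ^ (-((j : ℝ) * ((aLow 2 k : ℝ) + 1)) - (mu 2 k : ℝ) - (nu 2 k : ℝ))) ∧
    (‖Ij 2 k j‖ ≤
      (2:ℝ) ^ (-((j : ℝ) * ((aLow 2 k : ℝ) + 1)) - (mu 2 k : ℝ) - (nu 2 k : ℝ))) ∧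
    (∀ x ∈ Set.Icc (0:ℝ) 1,
      ‖Wj 2 k j x‖ ≤
        (2:ℝ) ^ (-((j : ℝ) * ((aLow 2 k : ℝ) + 1)) - (mu 2 k : ℝ) - (nu 2 k : ℝ) + 1)) ∧
    (Odd j → Ij 2 k j = 0) := by
  obtain ⟨e, E', hchain, hterms, haLow, hmusum⟩ := digits_decomp k hk
  obtain ⟨hInv0, hsym0⟩ := chainA hchain
  set g := WA (e :: E') with hg
  set m0 := mval (e :: E') with hm0def
  have hm0 : 0 ≤ m0 := mval_nonneg _
  obtain ⟨mJ, invJ, hbJ, hsymJ⟩ := chainJ (a := e+1) (by omega) hm0 hInv0 hsym0 j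
  obtain ⟨hWc, hIc⟩ := Wj_cast hterms j
  have hIj : Ij 2 k j = ((mJ : ℝ) : ℂ) := by
    rw [hIc, invJ.int01 (by omega)]
  set M := (qr (e+1) / 2)^j * m0 with hM
  have hMqr : M = qr ((e+2) * j + (mu 2 k + nu 2 k)) := by
    rw [hM, ← qr_succ, qr_pow, hm0def, mval, hmusum, qr_add]
  have hexp : -((j : ℝ) * ((aLow 2 k : ℝ) + 1)) - (mu 2 k : ℝ) - (nu 2 k : ℝ)
      = -((((e+2) * j + (mu 2 k + nu 2 k) : ℕ)) : ℝ) := by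
    rw [haLow]
    push_cast
    ring
  have hMeq : (2:ℝ) ^ (-((j : ℝ) * ((aLow 2 k : ℝ) + 1)) - (mu 2 k : ℝ) - (nu 2 k : ℝ)) = M := by
    rw [hexp, Real.rpow_neg (by norm_num), Real.rpow_natCast, hMqr, qr]
  have hWIx : ∀ x : ℝ, ‖Wj 2 k j x - Ij 2 k j‖ = |FJ g j x - mJ| := by
    intro x
    rw [hWc x, hIj, ← Complex.ofReal_sub, Complex.norm_real, Real.norm_eq_abs]
  refine ⟨?_, ?_, ?_, ?_⟩
  · intro x _
    rw [hWIx x, hMeq]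
    exact invJ.bdd x
  · rw [hIj, Complex.norm_real, Real.norm_eq_abs, hMeq]
    exact hbJ
  · intro x _
    rw [hWc x, Complex.norm_real, Real.norm_eq_abs,
      Real.rpow_add_one (by norm_num : (2:ℝ) ≠ 0), hMeq]
    have h1 := invJ.bdd x
    have h2 : |FJ g j x| ≤ |FJ g j x - mJ| + |mJ| := by
      calc |FJ g j x| = |(FJ g j x - mJ) + mJ| := by ring_nf
        _ ≤ |FJ g j x - mJ| + |mJ| := abs_add_le _ _
    linarith [hbJ]
  · intro hodd
    rw [hIc]
    have hsym' : ∀ x, FJ g j (1 - x) = -(FJ g j x) := by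
      intro x
      rw [hsymJ x, hodd.neg_one_pow]
      ring
    rw [int01_zero_of_odd_sym hsym']
    exact Complex.ofReal_zero

end WalshPaper
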